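/- Let X = C([0,1], ℝ³) be the space of continuous maps from [0,1] to ℝ³ equipped with the supremum norm, let E_s := 4·√(s(1−s)/(2π)) and c_E := ∫₀¹ E_s² ds, and define Γ : X → ℝ by Γ(ψ) = ∫₀¹ ‖ψ(s)‖ · (E_s/c_E) ds. Let φ ∈ X be such that the closure of the set {s ∈ [0,1] : φ(s) = 0} has Lebesgue measure zero. Then Γ is Fréchet differentiable at φ, and its Fréchet derivative is the continuous linear map h ↦ ∫₀¹ ( ⟨φ(s), h(s)⟩ / ‖φ(s)‖ ) · (E_s/c_E) ds, where the integrand is defined for almost every s (and set to 0 where φ(s) = 0). -/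

import Mathlib

open MeasureTheory

/-- The mean of the Brownian excursion at time `s`. -/
noncomputable def excMean (s : ℝ) : ℝ := 4 * Real.sqrt (s * (1 - s) / (2 * Real.pi))

/-- The normalizing constant `c_E = ∫₀¹ E_s² ds`. -/
noncomputable def cE : ℝ := ∫ s in (0 : ℝ)..1, (excMean s) ^ 2

/-- The functional `Γ(ψ) = ∫₀¹ ‖ψ(s)‖ (E_s / c_E) ds` on `C([0,1], ℝ³)`. -/
noncomputable def GammaFun
    (ψ : C(Set.Icc (0 : ℝ) 1, EuclideanSpace ℝ (Fin 3))) : ℝ :=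
  ∫ s in (0 : ℝ)..1, ‖Set.IccExtend zero_le_one (⇑ψ) s‖ * (excMean s / cE)

/-! The remainder `‖x + y‖ - ‖x‖ - ⟪x, y⟫ / ‖x‖` of the norm at `x ≠ 0` lies between `0` and
`‖y‖ · min 2 (‖y‖ / ‖x‖)`. Integrated against the weight, the remainder of `Γ` at `φ` in direction
`h` is therefore at most `‖h‖ · ∫ min 2 (‖h‖ / ‖φ s‖) |w s| ds` once `φ` vanishes only on a null set,
and this integral tends to `0` with `‖h‖` by dominated convergence. -/

open Filter Topology Asymptotics Set
open scoped RealInnerProductSpace unitInterval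

section NormRemainder

variable {E : Type*} [NormedAddCommGroup E] [InnerProductSpace ℝ E]

noncomputable def normRemainder (x y : E) : ℝ := ‖x + y‖ - ‖x‖ - ⟪x, y⟫ / ‖x‖

lemma abs_inner_div_norm_le (x y : E) : |⟪x, y⟫ / ‖x‖| ≤ ‖y‖ := by
  rcases eq_or_ne x 0 with rfl | hx
  · simp
  · rw [abs_div, abs_norm, div_le_iff₀ (norm_pos_iff.2 hx), mul_comm]
    exact abs_real_inner_le_norm x y

lemma normRemainder_nonneg (x y : E) : 0 ≤ normRemainder x y := by
  rcases eq_or_ne x 0 with rfl | hx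
  · simp [normRemainder]
  · have hcs : ⟪x, x + y⟫ ≤ ‖x‖ * ‖x + y‖ := real_inner_le_norm _ _
    rw [inner_add_right, real_inner_self_eq_norm_sq] at hcs
    have hdiv : ⟪x, y⟫ / ‖x‖ ≤ ‖x + y‖ - ‖x‖ := by
      rw [div_le_iff₀ (norm_pos_iff.2 hx)]
      nlinarith
    unfold normRemainder
    linarith

lemma normRemainder_le_two_mul (x y : E) : normRemainder x y ≤ 2 * ‖y‖ := by
  have htri := norm_add_le x y
  have hinner := (abs_le.1 (abs_inner_div_norm_le x y)).1
  unfold normRemainder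
  linarith

lemma normRemainder_le_sq_div {x : E} (hx : x ≠ 0) (y : E) :
    normRemainder x y ≤ ‖y‖ ^ 2 / (2 * ‖x‖) := by
  -- `2 ‖x‖ · normRemainder x y = ‖y‖ ^ 2 - (‖x + y‖ - ‖x‖) ^ 2`
  have hx' : 0 < ‖x‖ := norm_pos_iff.2 hx
  have hsq : ‖x + y‖ ^ 2 = ‖x‖ ^ 2 + 2 * ⟪x, y⟫ + ‖y‖ ^ 2 := norm_add_sq_real x y
  have e1 : ⟪x, y⟫ / ‖x‖ * ‖x‖ = ⟪x, y⟫ := div_mul_cancel₀ _ hx'.ne'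
  have e2 : ‖y‖ ^ 2 / (2 * ‖x‖) * (2 * ‖x‖) = ‖y‖ ^ 2 := div_mul_cancel₀ _ (by positivity)
  unfold normRemainder
  nlinarith [sq_nonneg (‖x + y‖ - ‖x‖), norm_nonneg (x + y)]

lemma normRemainder_le_mul_min {x : E} (hx : x ≠ 0) {y : E} {t : ℝ} (hyt : ‖y‖ ≤ t) :
    normRemainder x y ≤ ‖y‖ * min 2 (t / ‖x‖) := by
  have hx' : 0 < ‖x‖ := norm_pos_iff.2 hx
  rw [mul_min_of_nonneg _ _ (norm_nonneg y)]
  refine le_min (by linarith [normRemainder_le_two_mul x y])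
    ((normRemainder_le_sq_div hx y).trans ?_)
  rw [mul_div_assoc', div_le_div_iff₀ (by positivity) hx', sq]
  nlinarith [mul_le_mul_of_nonneg_left hyt (norm_nonneg y)]

end NormRemainder

section WeightedNormIntegral

variable {α E : Type*} [TopologicalSpace α] [MeasurableSpace α] [OpensMeasurableSpace α]
  [NormedAddCommGroup E] {μ : Measure α} {w : α → ℝ}

lemma integrable_min_div_norm_mul_abs (hw : Integrable w μ) (φ : C(α, E)) {t : ℝ}
    (ht : 0 ≤ t) : Integrable (fun s => min 2 (t / ‖φ s‖) * |w s|) μ :=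
  hw.abs.bdd_mul
    ((measurable_const.min (measurable_const.div
      φ.continuous.norm.measurable)).aestronglyMeasurable)
    (ae_of_all _ fun s => by
      rw [Real.norm_eq_abs, abs_of_nonneg (le_min zero_le_two (by positivity))]
      exact min_le_left _ _)

lemma tendsto_integral_min_div_norm_mul_abs (hw : Integrable w μ) (φ : C(α, E)) :
    Tendsto (fun t => ∫ s, min 2 (t / ‖φ s‖) * |w s| ∂μ) (𝓝[≥] 0) (𝓝 0) := by
  rw [show 𝓝 (0 : ℝ) = 𝓝 (∫ _, (0 : ℝ) ∂μ) by simp]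
  refine tendsto_integral_filter_of_dominated_convergence (fun s => 2 * |w s|)
    (eventually_nhdsWithin_of_forall fun t ht =>
      (integrable_min_div_norm_mul_abs hw φ ht).aestronglyMeasurable)
    (eventually_nhdsWithin_of_forall fun t ht => ae_of_all _ fun s => ?_)
    (hw.abs.const_mul 2) (ae_of_all _ fun s => ?_)
  · rw [norm_mul, Real.norm_eq_abs, Real.norm_eq_abs, abs_abs,
      abs_of_nonneg (le_min zero_le_two (div_nonneg ht (norm_nonneg _)))]
    exact mul_le_mul_of_nonneg_right (min_le_left _ _) (abs_nonneg _)
  · -- where `φ s = 0` the integrand vanishes identically, as `t / 0 = 0`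
    have hcont : Continuous fun t : ℝ => min 2 (t / ‖φ s‖) * |w s| := by fun_prop
    simpa using (hcont.tendsto 0).mono_left nhdsWithin_le_nhds

variable [CompactSpace α]

lemma integrable_norm_mul (hw : Integrable w μ) (ψ : C(α, E)) :
    Integrable (fun s => ‖ψ s‖ * w s) μ :=
  hw.bdd_mul ψ.continuous.norm.aestronglyMeasurable
    (ae_of_all _ fun s => by simpa using ψ.norm_coe_le_norm s)

variable [InnerProductSpace ℝ E]

lemma integrable_inner_div_norm_mul (hw : Integrable w μ) (φ h : C(α, E)) :
    Integrable (fun s => ⟪φ s, h s⟫ / ‖φ s‖ * w s) μ :=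
  hw.bdd_mul
    ((φ.continuous.inner h.continuous).measurable.div
      φ.continuous.norm.measurable).aestronglyMeasurable
    (ae_of_all _ fun s => (abs_inner_div_norm_le _ _).trans (h.norm_coe_le_norm s))

noncomputable def normIntegralDeriv (hw : Integrable w μ) (φ : C(α, E)) :
    C(α, E) →L[ℝ] ℝ :=
  LinearMap.mkContinuous
    { toFun := fun h => ∫ s, ⟪φ s, h s⟫ / ‖φ s‖ * w s ∂μ
      map_add' := fun h g => by
        rw [← integral_add (integrable_inner_div_norm_mul hw φ h)
          (integrable_inner_div_norm_mul hw φ g)]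
        simp only [ContinuousMap.add_apply, inner_add_right, add_div, add_mul]
      map_smul' := fun c h => by
        rw [RingHom.id_apply, smul_eq_mul, ← integral_const_mul]
        simp only [ContinuousMap.smul_apply, inner_smul_right, mul_div_assoc, mul_assoc] }
    (∫ s, |w s| ∂μ)
    (fun h => by
      rw [mul_comm, ← integral_const_mul]
      refine norm_integral_le_of_norm_le (hw.abs.const_mul _) (ae_of_all _ fun s => ?_)
      rw [norm_mul, Real.norm_eq_abs, Real.norm_eq_abs]
      exact mul_le_mul_of_nonneg_right
        ((abs_inner_div_norm_le _ _).trans (h.norm_coe_le_norm s)) (abs_nonneg _))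

lemma normIntegralDeriv_apply (hw : Integrable w μ) (φ h : C(α, E)) :
    normIntegralDeriv hw φ h = ∫ s, ⟪φ s, h s⟫ / ‖φ s‖ * w s ∂μ :=
  rfl

lemma integral_norm_add_mul_sub_sub_normIntegralDeriv (hw : Integrable w μ) (φ h : C(α, E)) :
    (∫ s, ‖(φ + h) s‖ * w s ∂μ) - (∫ s, ‖φ s‖ * w s ∂μ) - normIntegralDeriv hw φ h =
      ∫ s, normRemainder (φ s) (h s) * w s ∂μ := by
  rw [normIntegralDeriv_apply, ← integral_sub, ← integral_sub]
  · congr 1 with s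
    simp only [normRemainder, ContinuousMap.add_apply]
    ring
  · exact (integrable_norm_mul hw _).sub (integrable_norm_mul hw _)
  · exact integrable_inner_div_norm_mul hw φ h
  · exact integrable_norm_mul hw _
  · exact integrable_norm_mul hw _

lemma norm_integral_normRemainder_mul_le (hw : Integrable w μ) {φ : C(α, E)}
    (hφ : ∀ᵐ s ∂μ, φ s ≠ 0) (h : C(α, E)) :
    ‖∫ s, normRemainder (φ s) (h s) * w s ∂μ‖ ≤
      ‖h‖ * ∫ s, min 2 (‖h‖ / ‖φ s‖) * |w s| ∂μ := by
  rw [← integral_const_mul]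
  refine norm_integral_le_of_norm_le
    ((integrable_min_div_norm_mul_abs hw φ (norm_nonneg h)).const_mul _) ?_
  filter_upwards [hφ] with s hs
  rw [norm_mul, Real.norm_eq_abs, Real.norm_eq_abs, abs_of_nonneg (normRemainder_nonneg _ _),
    ← mul_assoc]
  exact mul_le_mul_of_nonneg_right
    ((normRemainder_le_mul_min hs (h.norm_coe_le_norm s)).trans
      (mul_le_mul_of_nonneg_right (h.norm_coe_le_norm s) (le_min zero_le_two (by positivity))))
    (abs_nonneg _)

theorem hasFDerivAt_integral_norm_mul (hw : Integrable w μ) {φ : C(α, E)}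
    (hφ : ∀ᵐ s ∂μ, φ s ≠ 0) :
    HasFDerivAt (fun ψ : C(α, E) => ∫ s, ‖ψ s‖ * w s ∂μ) (normIntegralDeriv hw φ) φ := by
  rw [hasFDerivAt_iff_isLittleO_nhds_zero, isLittleO_iff]
  intro c hc
  have hnorm : Tendsto (fun h : C(α, E) => ‖h‖) (𝓝 0) (𝓝[≥] 0) :=
    tendsto_nhdsWithin_iff.2 ⟨tendsto_norm_zero, Eventually.of_forall fun h => norm_nonneg h⟩
  filter_upwards [((tendsto_integral_min_div_norm_mul_abs hw φ).comp hnorm).eventually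
    (ge_mem_nhds hc)] with h hh
  rw [integral_norm_add_mul_sub_sub_normIntegralDeriv]
  calc _ ≤ ‖h‖ * ∫ s, min 2 (‖h‖ / ‖φ s‖) * |w s| ∂μ :=
        norm_integral_normRemainder_mul_le hw hφ h
    _ ≤ c * ‖h‖ := by rw [mul_comm]; exact mul_le_mul_of_nonneg_right hh (norm_nonneg h)

end WeightedNormIntegral

lemma intervalIntegral_zero_one_eq_integral_unitInterval {F : Type*} [NormedAddCommGroup F]
    [NormedSpace ℝ F] (f : ℝ → F) : ∫ s in (0 : ℝ)..1, f s = ∫ s : I, f s := by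
  rw [intervalIntegral.integral_of_le zero_le_one, ← integral_Icc_eq_integral_Ioc,
    ← integral_subtype_comap measurableSet_Icc]
  rfl

lemma continuous_excMean : Continuous excMean := by
  unfold excMean
  fun_prop

lemma integrable_excMean_div_cE :
    Integrable fun s : I => excMean s / cE :=
  (continuous_excMean.comp continuous_subtype_val).div_const _
    |>.integrable_of_hasCompactSupport (HasCompactSupport.of_compactSpace _)

lemma gammaFun_eq_integral_unitInterval :
    GammaFun = fun ψ => ∫ s : I, ‖ψ s‖ * (excMean s / cE) := by
  funext ψ
  rw [GammaFun, intervalIntegral_zero_one_eq_integral_unitInterval]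
  simp only [IccExtend_val]

lemma ae_ne_zero_of_volume_closure_IccExtend_eq_zero {F : Type*} [Zero F] {f : I → F}
    (hf : volume (closure {s : ℝ | s ∈ I ∧ IccExtend zero_le_one f s = 0}) = 0) :
    ∀ᵐ s : I, f s ≠ 0 := by
  rw [ae_iff, unitInterval.volume_apply]
  refine measure_mono_null ?_ hf
  rintro _ ⟨s, hs, rfl⟩
  exact subset_closure ⟨s.2, by simpa using hs⟩

theorem stmt_10 (φ : C(Set.Icc (0 : ℝ) 1, EuclideanSpace ℝ (Fin 3)))
    (hφ : volume (closure {s : ℝ | s ∈ Set.Icc (0 : ℝ) 1 ∧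
        Set.IccExtend zero_le_one (⇑φ) s = 0}) = 0) :
    ∃ L : C(Set.Icc (0 : ℝ) 1, EuclideanSpace ℝ (Fin 3)) →L[ℝ] ℝ,
      HasFDerivAt GammaFun L φ ∧
      ∀ h : C(Set.Icc (0 : ℝ) 1, EuclideanSpace ℝ (Fin 3)),
        L h = ∫ s in (0 : ℝ)..1,
          ((inner ℝ (Set.IccExtend zero_le_one (⇑φ) s)
              (Set.IccExtend zero_le_one (⇑h) s) : ℝ) /
            ‖Set.IccExtend zero_le_one (⇑φ) s‖) * (excMean s / cE) := by
  refine ⟨normIntegralDeriv integrable_excMean_div_cE φ, ?_, fun h => ?_⟩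
  · rw [gammaFun_eq_integral_unitInterval]
    exact hasFDerivAt_integral_norm_mul integrable_excMean_div_cE
      (ae_ne_zero_of_volume_closure_IccExtend_eq_zero hφ)
  · rw [normIntegralDeriv_apply, intervalIntegral_zero_one_eq_integral_unitInterval]
    simp only [IccExtend_val]
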